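/- arXiv:2203.15531 — 7 statements merged into one kernel-verified Lean document; each statement's English description precedes it below -/
import Mathlib

section
/- Let n ≥ 0 and let H ⊆ ℝ^{n+1} be a set which is a cone with vertex 0 and also a cone with vertex p for some point p ∈ ℝ^{n+1}. Then H is invariant under all translations in the direction of p: for every t ∈ ℝ one has {x + t·p : x ∈ H} = H. -/
/-- A set `H` is a cone with vertex `p` if for every `λ > 0`,
`{p + λ • (x - p) : x ∈ H} = H`. -/
def IsConeWithVertex {E : Type*} [AddCommGroup E] [Module ℝ E] (H : Set E) (p : E) : Prop :=
  ∀ l : ℝ, 0 < l → (fun x => p + l • (x - p)) '' H = H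

/-- If `H ⊆ ℝ^{n+1}` is a cone with vertex `0` and also a cone with vertex `p`,
then `H` is invariant under all translations in the direction of `p`. -/
theorem cone_two_vertices_translation_invariant (n : ℕ)
    (H : Set (EuclideanSpace ℝ (Fin (n + 1)))) (p : EuclideanSpace ℝ (Fin (n + 1)))
    (h0 : IsConeWithVertex H 0) (hp : IsConeWithVertex H p) :
    ∀ t : ℝ, (fun x => x + t • p) '' H = H := by
  intro t
  rcases le_or_gt 0 t with ht | ht
  · -- use scaling by t+1 after cone-at-p with ratio 1/(t+1)
    have ht1 : (0:ℝ) < t + 1 := by linarith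
    have hne : (t + 1 : ℝ) ≠ 0 := ne_of_gt ht1
    have h1 := hp (1/(t+1)) (by positivity)
    have h2 := h0 (t+1) ht1
    have key : (fun x : EuclideanSpace ℝ (Fin (n+1)) => x + t • p)
        = (fun x : EuclideanSpace ℝ (Fin (n+1)) => (0:EuclideanSpace ℝ (Fin (n+1))) + (t+1) • (x - 0))
          ∘ (fun x => p + (1/(t+1)) • (x - p)) := by
      funext x
      simp only [Function.comp, sub_zero, zero_add, smul_add, smul_smul]
      rw [mul_one_div_cancel hne, one_smul]
      module
    rw [key, Set.image_comp, h1, h2]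
  · have ht1 : (0:ℝ) < 1 - t := by linarith
    have hne : (1 - t : ℝ) ≠ 0 := ne_of_gt ht1
    have h1 := h0 (1/(1-t)) (by positivity)
    have h2 := hp (1-t) ht1
    have key : (fun x : EuclideanSpace ℝ (Fin (n+1)) => x + t • p)
        = (fun x : EuclideanSpace ℝ (Fin (n+1)) => p + (1-t) • (x - p))
          ∘ (fun x => (0:EuclideanSpace ℝ (Fin (n+1))) + (1/(1-t)) • (x - 0)) := by
      funext x
      simp only [Function.comp, sub_zero, zero_add, smul_sub, smul_smul]
      rw [mul_one_div_cancel hne, one_smul]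
      module
    rw [key, Set.image_comp, h1, h2]
end

section
/- Let H ⊆ ℝ^{n+1} and let p₁, …, p_m ∈ ℝ^{n+1} be points such that H is a cone with vertex p_j for every j = 1, …, m. Let V be the linear span of {p_j − p₁ : j = 1, …, m}. Then {x + v : x ∈ H} = H for every v ∈ V, and moreover H is a cone with vertex p₁ + v for every v ∈ V. -/
/-!
Composing the dilation of ratio `1/μ` about a vertex `q` with the dilation of ratio `μ` about
a vertex `p` is the translation by `(μ - 1) • (q - p)`, so every translation by `t • (q - p)`
with `t > -1` preserves `H`; the translations preserving `H` form a group, which gives all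
`t`, and then the whole span. A dilation about `p + v` is a dilation about `p` followed by a
translation along `v`.
-/

open Pointwise

lemma image_add_right_eq_iff_mem_stabilizer {E : Type*} [AddCommGroup E] {H : Set E} {v : E} :
    (fun x => x + v) '' H = H ↔ v ∈ AddAction.stabilizer E H := by
  simp only [AddAction.mem_stabilizer_iff, ← Set.image_vadd, vadd_eq_add, add_comm v]

lemma smul_mem_of_mem_span {R E : Type*} [Semiring R] [AddCommGroup E] [Module R E]
    {S : AddSubgroup E} {s : Set E} (hs : ∀ v ∈ s, ∀ t : R, t • v ∈ S)
    {v : E} (hv : v ∈ Submodule.span R s) (t : R) : t • v ∈ S := by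
  induction hv using Submodule.span_induction generalizing t with
  | mem x hx => exact hs x hx t
  | zero => simp
  | add x y _ _ hx hy => rw [smul_add]; exact S.add_mem (hx t) (hy t)
  | smul c x _ hx => rw [smul_smul]; exact hx (t * c)

namespace IsConeWithVertex

variable {E : Type*} [AddCommGroup E] [Module ℝ E] {H : Set E} {p q v : E}

lemma smul_sub_mem_stabilizer (hp : IsConeWithVertex H p) (hq : IsConeWithVertex H q) (t : ℝ) :
    t • (q - p) ∈ AddAction.stabilizer E H := by
  have of_gt : ∀ t : ℝ, -1 < t → t • (q - p) ∈ AddAction.stabilizer E H := by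
    intro t ht
    have hμ : (0 : ℝ) < t + 1 := by linarith
    have dilations : (fun x => x + t • (q - p)) =
        (fun x => p + (t + 1) • (x - p)) ∘ (fun x => q + (t + 1)⁻¹ • (x - q)) := by
      funext x
      simp only [Function.comp]
      match_scalars <;> field_simp <;> ring
    rw [← image_add_right_eq_iff_mem_stabilizer, dilations, Set.image_comp,
      hq _ (inv_pos.2 hμ), hp _ hμ]
  rcases lt_or_ge (-1) t with ht | ht
  · exact of_gt t ht
  · simpa using neg_mem (of_gt (-t) (by linarith))

lemma add_vertex (hp : IsConeWithVertex H p) (hv : ∀ t : ℝ, t • v ∈ AddAction.stabilizer E H) :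
    IsConeWithVertex H (p + v) := by
  intro l hl
  have dilation : (fun x => p + v + l • (x - (p + v))) =
      (fun x => x + (1 - l) • v) ∘ (fun x => p + l • (x - p)) := by
    funext x
    simp only [Function.comp]
    match_scalars <;> ring
  rw [dilation, Set.image_comp, hp l hl, image_add_right_eq_iff_mem_stabilizer.2 (hv _)]

end IsConeWithVertex

/-- Lemma 3.15 (Linear Auto-Alignments): if `H ⊆ ℝ^{n+1}` is a cone with vertex `p j`
for every `j`, and `V` is the linear span of the differences `p j - p 0`, then `H` is
invariant under translation by every `v ∈ V`, and `H` is a cone with vertex `p 0 + v`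
for every `v ∈ V`. -/
theorem cone_multi_vertices_translation_invariant (n m : ℕ) (hm : 0 < m)
    (H : Set (EuclideanSpace ℝ (Fin (n + 1))))
    (p : Fin m → EuclideanSpace ℝ (Fin (n + 1)))
    (hcone : ∀ j, IsConeWithVertex H (p j)) :
    ∀ v ∈ Submodule.span ℝ (Set.range fun j => p j - p ⟨0, hm⟩),
      (fun x => x + v) '' H = H ∧ IsConeWithVertex H (p ⟨0, hm⟩ + v) := by
  intro v hv
  have hstab : ∀ t : ℝ, t • v ∈ AddAction.stabilizer _ H := by
    refine smul_mem_of_mem_span ?_ hv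
    rintro _ ⟨j, rfl⟩
    exact (hcone _).smul_sub_mem_stabilizer (hcone j)
  exact ⟨image_add_right_eq_iff_mem_stabilizer.2 (by simpa using hstab 1),
    (hcone _).add_vertex hstab⟩
end

section
/- Let n ≥ 2 be an integer, let 0 ≤ a < b be reals, and let A, B, c > 0. Let F : [a,b] → ℝ be nondecreasing with A·rⁿ ≤ F(r) ≤ B·rⁿ for all r ∈ [a,b], and let f : [a,b] → ℝ be nonnegative, Lebesgue integrable, and satisfy ∫ₜˢ f(r) dr ≤ F(s) − F(t) whenever a ≤ t ≤ s ≤ b. Then the Lebesgue measure of the set J := {r ∈ [a,b] : f(r) > c·r^{n−1}} satisfies μ₁(J) ≤ (B·b − A·a + (n−1)·B·(b−a))/c. -/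
/-!
Write `m = n - 1`. For `0 < r ≤ b`, `r⁻ᵐ = b⁻ᵐ + ∫ᵣᵇ m s⁻ᵐ⁻¹ ds`; inserting this into
`∫ₐᵇ f(r) r⁻ᵐ dr` and applying Tonelli on the triangle `r < s` gives the integration by parts
`∫ₐᵇ f(r) r⁻ᵐ dr = b⁻ᵐ ∫ₐᵇ f + ∫ₐᵇ m s⁻ᵐ⁻¹ (∫ₐˢ f) ds`. The coarea hypothesis bounds
`∫ₐˢ f ≤ F s - F a ≤ B sᵐ⁺¹ - A aᵐ⁺¹`, and the right-hand side then integrates exactly to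
`B b - A a + m B (b - a)`. Markov's inequality for `f(r) r⁻ᵐ ≥ c` concludes.
-/

open MeasureTheory Set
open scoped ENNReal

theorem hasDerivAt_inv_pow (m : ℕ) {s : ℝ} (hs : s ≠ 0) :
    HasDerivAt (fun x : ℝ => (x ^ m)⁻¹) (-(m / s ^ (m + 1))) s := by
  have h := hasDerivAt_zpow (-(m : ℤ)) s (Or.inl hs)
  simp only [zpow_neg, zpow_natCast] at h
  refine h.congr_deriv ?_
  rw [show -(m : ℤ) - 1 = -((m + 1 : ℕ) : ℤ) by push_cast; ring, zpow_neg, zpow_natCast]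
  push_cast
  ring

theorem ofReal_add_lintegral_ofReal_deriv {g g' : ℝ → ℝ} {a b c : ℝ} (hab : a ≤ b) (hc : 0 ≤ c)
    (hcont : ContinuousOn g (Icc a b)) (hderiv : ∀ x ∈ Ioo a b, HasDerivAt g (g' x) x)
    (hpos : ∀ x ∈ Ioo a b, 0 ≤ g' x) :
    ENNReal.ofReal c + ∫⁻ x in Ioc a b, ENNReal.ofReal (g' x) =
      ENNReal.ofReal (c + (g b - g a)) := by
  have hint := intervalIntegral.integrableOn_deriv_of_nonneg hcont hderiv hpos
  have hnonneg : 0 ≤ᵐ[volume.restrict (Ioc a b)] g' := by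
    rw [← Measure.restrict_congr_set Ioo_ae_eq_Ioc]
    exact (ae_restrict_iff' measurableSet_Ioo).2 (ae_of_all _ hpos)
  rw [← ofReal_integral_eq_lintegral_ofReal hint hnonneg,
    ← ENNReal.ofReal_add hc (integral_nonneg_of_ae hnonneg), ← intervalIntegral.integral_of_le hab,
    intervalIntegral.integral_eq_sub_of_hasDerivAt_of_le hab hcont hderiv
      ((intervalIntegrable_iff_integrableOn_Ioc_of_le hab).2 hint)]

theorem inv_ofReal_pow_eq_add_lintegral (m : ℕ) {r b : ℝ} (hr : 0 < r) (hrb : r ≤ b) :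
    (ENNReal.ofReal (r ^ m))⁻¹ =
      (ENNReal.ofReal (b ^ m))⁻¹ + ∫⁻ s in Ioc r b, ENNReal.ofReal (m / s ^ (m + 1)) := by
  have hderiv : ∀ s ∈ Icc r b, HasDerivAt (fun x : ℝ => -(x ^ m)⁻¹) (m / s ^ (m + 1)) s :=
    fun s hs => by simpa using (hasDerivAt_inv_pow m (hr.trans_le hs.1).ne').fun_neg
  have hb := hr.trans_le hrb
  rw [← ENNReal.ofReal_inv_of_pos (by positivity), ← ENNReal.ofReal_inv_of_pos (by positivity),
    ofReal_add_lintegral_ofReal_deriv hrb (by positivity)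
      (fun s hs => (hderiv s hs).continuousAt.continuousWithinAt)
      (fun s hs => hderiv s (Ioo_subset_Icc_self hs))
      (fun s hs => by have := hr.trans hs.1; positivity)]
  ring_nf

theorem lintegral_mul_lintegral_Ioc_eq {μ : Measure ℝ} [SFinite μ] {f k : ℝ → ℝ≥0∞} {a b : ℝ}
    (hf : AEMeasurable f (μ.restrict (Ioc a b))) (hk : AEMeasurable k (μ.restrict (Ioc a b))) :
    ∫⁻ r in Ioc a b, f r * ∫⁻ s in Ioc r b, k s ∂μ ∂μ =
      ∫⁻ s in Ioc a b, k s * ∫⁻ r in Ioo a s, f r ∂μ ∂μ := by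
  let T : ℝ → ℝ → ℝ≥0∞ := fun r s =>
    {p : ℝ × ℝ | p.1 < p.2}.indicator (fun p => f p.1 * k p.2) (r, s)
  have hT_meas :
      AEMeasurable (Function.uncurry T) ((μ.restrict (Ioc a b)).prod (μ.restrict (Ioc a b))) :=
    (hf.comp_fst.mul hk.comp_snd).indicator (measurableSet_lt measurable_fst measurable_snd)
  calc ∫⁻ r in Ioc a b, f r * ∫⁻ s in Ioc r b, k s ∂μ ∂μ
      = ∫⁻ r in Ioc a b, ∫⁻ s in Ioc a b, T r s ∂μ ∂μ := by
        refine setLIntegral_congr_fun measurableSet_Ioc fun r hr => ?_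
        have hTr : ∀ s, T r s = (Ioi r).indicator (fun s => f r * k s) s := fun s => rfl
        rw [lintegral_congr hTr, lintegral_indicator measurableSet_Ioi,
          Measure.restrict_restrict measurableSet_Ioi, inter_comm, Ioc_inter_Ioi,
          sup_eq_right.2 hr.1.le,
          lintegral_const_mul'' _ (hk.mono_set (Ioc_subset_Ioc_left hr.1.le))]
    _ = ∫⁻ s in Ioc a b, ∫⁻ r in Ioc a b, T r s ∂μ ∂μ := lintegral_lintegral_swap hT_meas
    _ = ∫⁻ s in Ioc a b, k s * ∫⁻ r in Ioo a s, f r ∂μ ∂μ := by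
        refine setLIntegral_congr_fun measurableSet_Ioc fun s hs => ?_
        have hTs : ∀ r, T r s = (Iio s).indicator (fun r => f r * k s) r := fun r => rfl
        have hIoo : Iio s ∩ Ioc a b = Ioo a s := by
          ext x
          simp only [mem_inter_iff, mem_Iio, mem_Ioc, mem_Ioo]
          grind
        rw [lintegral_congr hTs, lintegral_indicator measurableSet_Iio,
          Measure.restrict_restrict measurableSet_Iio, hIoo, lintegral_mul_const'' _
            (hf.mono_set (Ioo_subset_Ioc_self.trans (Ioc_subset_Ioc_right hs.2))), mul_comm]

theorem lintegral_mul_le_of_lintegral_Ioc_le {μ : Measure ℝ} [SFinite μ] {f k w P : ℝ → ℝ≥0∞}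
    {a b : ℝ} (hab : a < b) (hf : AEMeasurable f (μ.restrict (Ioc a b)))
    (hk : AEMeasurable k (μ.restrict (Ioc a b)))
    (hw : ∀ r ∈ Ioc a b, w r = w b + ∫⁻ s in Ioc r b, k s ∂μ)
    (hP : ∀ s ∈ Ioc a b, ∫⁻ r in Ioc a s, f r ∂μ ≤ P s) :
    ∫⁻ r in Ioc a b, f r * w r ∂μ ≤ P b * w b + ∫⁻ s in Ioc a b, k s * P s ∂μ :=
  calc ∫⁻ r in Ioc a b, f r * w r ∂μ
      = ∫⁻ r in Ioc a b, (f r * w b + f r * ∫⁻ s in Ioc r b, k s ∂μ) ∂μ :=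
        setLIntegral_congr_fun measurableSet_Ioc fun r hr => by rw [hw r hr, mul_add]
    _ = (∫⁻ r in Ioc a b, f r ∂μ) * w b + ∫⁻ s in Ioc a b, k s * ∫⁻ r in Ioo a s, f r ∂μ ∂μ := by
        rw [lintegral_add_left' (hf.mul_const _), lintegral_mul_const'' _ hf,
          lintegral_mul_lintegral_Ioc_eq hf hk]
    _ ≤ P b * w b + ∫⁻ s in Ioc a b, k s * P s ∂μ := by
        gcongr ?_ * _ + ?_
        · exact hP b ⟨hab, le_rfl⟩
        · refine setLIntegral_mono' measurableSet_Ioc fun s hs => ?_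
          gcongr
          exact (lintegral_mono_set Ioo_subset_Ioc_self).trans (hP s hs)

theorem ofReal_mul_inv_pow_add_lintegral_eq (m : ℕ) {a b A B : ℝ} (ha : 0 ≤ a) (hab : a < b)
    (hAB : ∀ s ∈ Ioc a b, A * a ^ (m + 1) ≤ B * s ^ (m + 1)) :
    ENNReal.ofReal (B * b ^ (m + 1) - A * a ^ (m + 1)) * (ENNReal.ofReal (b ^ m))⁻¹ +
        ∫⁻ s in Ioc a b,
          ENNReal.ofReal (m / s ^ (m + 1)) * ENNReal.ofReal (B * s ^ (m + 1) - A * a ^ (m + 1)) =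
      ENNReal.ofReal (B * b - A * a + m * B * (b - a)) := by
  set Q : ℝ → ℝ := fun s => m * B * s + A * a ^ (m + 1) * (s ^ m)⁻¹
  have hb : 0 < b := ha.trans_lt hab
  have hPb : 0 ≤ B * b ^ (m + 1) - A * a ^ (m + 1) := sub_nonneg.2 (hAB b ⟨hab, le_rfl⟩)
  have hQcont : ContinuousOn Q (Icc a b) := by
    rcases ha.eq_or_lt with rfl | ha0
    · simp only [Q, zero_pow m.succ_ne_zero, mul_zero, zero_mul, add_zero]
      fun_prop
    · exact continuousOn_of_forall_continuousAt fun s hs => by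
        fun_prop (disch := exact pow_ne_zero _ (ha0.trans_le hs.1).ne')
  have hQa : A * a ^ (m + 1) * (a ^ m)⁻¹ = A * a := by
    rcases ha.eq_or_lt with rfl | ha0
    · simp
    · field_simp; ring
  have hQderiv : ∀ s ∈ Ioo a b,
      HasDerivAt Q (m / s ^ (m + 1) * (B * s ^ (m + 1) - A * a ^ (m + 1))) s := fun s hs => by
    have hs : s ≠ 0 := (ha.trans_lt hs.1).ne'
    refine (((hasDerivAt_id s).const_mul (m * B)).add
      ((hasDerivAt_inv_pow m hs).const_mul (A * a ^ (m + 1)))).congr_deriv ?_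
    field_simp
    ring
  rw [← ENNReal.ofReal_inv_of_pos (pow_pos hb m), ← ENNReal.ofReal_mul hPb,
    setLIntegral_congr_fun measurableSet_Ioc fun s hs =>
      (ENNReal.ofReal_mul (by have := ha.trans_lt hs.1; positivity)).symm,
    ofReal_add_lintegral_ofReal_deriv hab.le (by positivity) hQcont hQderiv fun s hs => by
      have := ha.trans_lt hs.1
      have := sub_nonneg.2 (hAB s (Ioo_subset_Ioc_self hs))
      positivity]
  congr 1
  simp only [Q]
  rw [hQa]
  field_simp
  ring

theorem lintegral_ofReal_mul_inv_pow_le (m : ℕ) {f : ℝ → ℝ} {a b A B : ℝ} (ha : 0 ≤ a)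
    (hab : a < b) (hf0 : ∀ r ∈ Icc a b, 0 ≤ f r) (hfint : IntegrableOn f (Icc a b))
    (hF : ∀ s ∈ Ioc a b, ∫ r in a..s, f r ≤ B * s ^ (m + 1) - A * a ^ (m + 1)) :
    ∫⁻ r in Ioc a b, ENNReal.ofReal (f r) * (ENNReal.ofReal (r ^ m))⁻¹ ≤
      ENNReal.ofReal (B * b - A * a + m * B * (b - a)) := by
  have hP : ∀ s ∈ Ioc a b,
      ∫⁻ r in Ioc a s, ENNReal.ofReal (f r) ≤ ENNReal.ofReal (B * s ^ (m + 1) - A * a ^ (m + 1)) :=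
    fun s hs => by
      have hsub : Ioc a s ⊆ Icc a b := Ioc_subset_Icc_self.trans (Icc_subset_Icc_right hs.2)
      rw [← ofReal_integral_eq_lintegral_ofReal (hfint.mono_set hsub)
        ((ae_restrict_iff' measurableSet_Ioc).2 (ae_of_all _ fun r hr => hf0 r (hsub hr))),
        ← intervalIntegral.integral_of_le hs.1.le]
      exact ENNReal.ofReal_le_ofReal (hF s hs)
  have hP_nonneg : ∀ s ∈ Ioc a b, A * a ^ (m + 1) ≤ B * s ^ (m + 1) := fun s hs =>
    sub_nonneg.1 <| (intervalIntegral.integral_nonneg hs.1.le fun r hr =>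
      hf0 r ⟨hr.1, hr.2.trans hs.2⟩).trans (hF s hs)
  rw [← ofReal_mul_inv_pow_add_lintegral_eq m ha hab hP_nonneg]
  exact lintegral_mul_le_of_lintegral_Ioc_le hab
    (hfint.mono_set Ioc_subset_Icc_self).aemeasurable.ennreal_ofReal
    (by fun_prop : Measurable fun s : ℝ => ENNReal.ofReal (m / s ^ (m + 1))).aemeasurable
    (fun r hr => inv_ofReal_pow_eq_add_lintegral m (ha.trans_lt hr.1) hr.2) hP

theorem measure_exceptional_radii_le_general (n : ℕ) (hn : 2 ≤ n) (a b A B c : ℝ)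
    (ha : 0 ≤ a) (hab : a < b) (hc : 0 < c)
    (F f : ℝ → ℝ)
    (hFlb : ∀ r ∈ Set.Icc a b, A * r ^ n ≤ F r)
    (hFub : ∀ r ∈ Set.Icc a b, F r ≤ B * r ^ n)
    (hf0 : ∀ r ∈ Set.Icc a b, 0 ≤ f r)
    (hfint : IntegrableOn f (Set.Icc a b))
    (hcoarea : ∀ t s : ℝ, a ≤ t → t ≤ s → s ≤ b → ∫ r in t..s, f r ≤ F s - F t) :
    volume {r ∈ Set.Icc a b | c * r ^ (n - 1) < f r} ≤
      ENNReal.ofReal ((B * b - A * a + ((n : ℝ) - 1) * B * (b - a)) / c) := by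
  obtain ⟨m, rfl⟩ : ∃ m, n = m + 1 := ⟨n - 1, by omega⟩
  simp only [Nat.add_sub_cancel, Nat.cast_add, Nat.cast_one, add_sub_cancel_right]
  -- The `ℝ≥0∞` inverse makes the weight `∞` at `r = 0`, so `hJ` also holds there when `a = 0`.
  set g : ℝ → ℝ≥0∞ := fun r => ENNReal.ofReal (f r) * (ENNReal.ofReal (r ^ m))⁻¹
  have hJ : {r ∈ Icc a b | c * r ^ m < f r} ⊆ {r | ENNReal.ofReal c ≤ g r} ∩ Icc a b :=
    fun r ⟨hr, hlt⟩ => by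
      have hfr : 0 < f r := lt_of_le_of_lt (by have := ha.trans hr.1; positivity) hlt
      refine ⟨(ENNReal.le_div_iff_mul_le (Or.inr (ENNReal.ofReal_pos.2 hfr).ne')
        (Or.inl ENNReal.ofReal_ne_top)).2 ?_, hr⟩
      rw [← ENNReal.ofReal_mul hc.le]
      exact ENNReal.ofReal_le_ofReal hlt.le
  have hg : ∫⁻ r in Ioc a b, g r ≤ ENNReal.ofReal (B * b - A * a + m * B * (b - a)) :=
    lintegral_ofReal_mul_inv_pow_le m ha hab hf0 hfint fun s hs => by
      linarith [hcoarea a s le_rfl hs.1.le hs.2, hFub s (Ioc_subset_Icc_self hs),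
        hFlb a (left_mem_Icc.2 hab.le)]
  calc volume {r ∈ Icc a b | c * r ^ m < f r}
      ≤ volume.restrict (Icc a b) {r | ENNReal.ofReal c ≤ g r} :=
        (measure_mono hJ).trans (Measure.le_restrict_apply _ _)
    _ ≤ (∫⁻ r in Icc a b, g r) / ENNReal.ofReal c :=
        meas_ge_le_lintegral_div (hfint.aemeasurable.ennreal_ofReal.mul (by fun_prop))
          (by simpa using hc) ENNReal.ofReal_ne_top
    _ = (∫⁻ r in Ioc a b, g r) / ENNReal.ofReal c := by
        rw [Measure.restrict_congr_set Ioc_ae_eq_Icc]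
    _ ≤ ENNReal.ofReal (B * b - A * a + m * B * (b - a)) / ENNReal.ofReal c := by gcongr
    _ = ENNReal.ofReal ((B * b - A * a + m * B * (b - a)) / c) :=
        (ENNReal.ofReal_div_of_pos hc).symm

/-- Corollary 1.4 (abstract form): if `F` plays the role of the volume of balls
(`A·rⁿ ≤ F(r) ≤ B·rⁿ`, nondecreasing) and `f ≥ 0` plays the role of the perimeter of
sphere boundaries (coarea: `∫ₜˢ f ≤ F(s) − F(t)`), then the set of radii `r ∈ [a,b]`
where `f(r) > c·r^{n−1}` has Lebesgue measure at most
`(B·b − A·a + (n−1)·B·(b−a))/c`. -/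
theorem measure_exceptional_radii_le (n : ℕ) (hn : 2 ≤ n) (a b A B c : ℝ)
    (ha : 0 ≤ a) (hab : a < b) (hA : 0 < A) (hB : 0 < B) (hc : 0 < c)
    (F f : ℝ → ℝ)
    (hFmono : MonotoneOn F (Set.Icc a b))
    (hFlb : ∀ r ∈ Set.Icc a b, A * r ^ n ≤ F r)
    (hFub : ∀ r ∈ Set.Icc a b, F r ≤ B * r ^ n)
    (hf0 : ∀ r ∈ Set.Icc a b, 0 ≤ f r)
    (hfint : IntegrableOn f (Set.Icc a b))
    (hcoarea : ∀ t s : ℝ, a ≤ t → t ≤ s → s ≤ b → ∫ r in t..s, f r ≤ F s - F t) :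
    volume {r ∈ Set.Icc a b | c * r ^ (n - 1) < f r} ≤
      ENNReal.ofReal ((B * b - A * a + ((n : ℝ) - 1) * B * (b - a)) / c) :=
  measure_exceptional_radii_le_general n hn a b A B c ha hab hc F f hFlb hFub hf0 hfint hcoarea
end

section
/- Let (X, d) be a compact metric space and μ a finite Borel measure on X such that A·rⁿ ≤ μ(closedBall(x, r)) for every x ∈ X and every r ∈ (0, 1], where A > 0 and n ≥ 1 is an integer. Let s ∈ (0, 1/100) and let (Σ_i)_{i ∈ ℕ} be an arbitrary sequence of subsets of X. Then there exist finite subsets A_i ⊆ Σ_i, i ∈ ℕ, such that: (1) for all i, k ∈ ℕ and all distinct points p ∈ A_i, q ∈ A_k one has d(p, q) > max(s^i, s^k); and (2) for every k ∈ ℕ, ⋃_{i ≤ k} Σ_i ⊆ ⋃_{i ≤ k} ⋃_{p ∈ A_i} closedBall(p, s^i). -/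
/-!
The centres are chosen greedily, layer by layer: layer `k` is a maximal `sᵏ`-separated subset of
the part of `Σₖ` not yet covered by the closed balls of the earlier layers. Maximality makes layer
`k` cover what is left of `Σₖ`; its points lie outside the earlier, larger balls, which separates
them from the earlier layers; and in a compact space every separated set is finite.
-/

open Metric MeasureTheory
open scoped NNReal

namespace Metric

lemma packingNumber_ne_top_of_totallyBounded {X : Type*} [PseudoEMetricSpace X] {ε : ℝ≥0}
    {A : Set X} (hε : ε ≠ 0) (hA : TotallyBounded A) : packingNumber ε A ≠ ⊤ := by
  obtain ⟨N, -, hN, hcover⟩ := exists_finite_isCover_of_totallyBounded (half_pos hε.bot_lt).ne' hA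
  have hpacking := packingNumber_two_mul_le_externalCoveringNumber (ε / 2) A
  rw [mul_div_cancel₀ ε two_ne_zero] at hpacking
  exact (hpacking.trans hcover.externalCoveringNumber_le_encard).trans_lt hN.encard_lt_top |>.ne

lemma finite_maximalSeparatedSet {X : Type*} [PseudoEMetricSpace X] (ε : ℝ≥0) (A : Set X) :
    (maximalSeparatedSet ε A).Finite := by
  by_cases h : packingNumber ε A = ⊤
  -- `maximalSeparatedSet` is defined as `∅` when the packing number is infinite.
  · simp [maximalSeparatedSet, h]
  · exact Set.encard_ne_top_iff.mp (encard_maximalSeparatedSet h ▸ h)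

lemma isSeparated_coe_iff {X : Type*} [PseudoMetricSpace X] {ε : ℝ≥0} {s : Set X} :
    IsSeparated ε s ↔ s.Pairwise fun x y => (ε : ℝ) < dist x y := by
  simp only [IsSeparated, edist_nndist, ENNReal.coe_lt_coe, ← NNReal.coe_lt_coe, coe_nndist]

section GreedySeparatedCover

variable {X : Type*} [PseudoMetricSpace X] (r : ℕ → ℝ≥0) (S : ℕ → Set X)

noncomputable def greedySeparatedCover : ℕ → Set X :=
  Nat.strongRec fun k prev => maximalSeparatedSet (r k)
    (S k \ ⋃ (i) (hi : i < k), ⋃ p ∈ prev i hi, closedBall p (r i))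

lemma greedySeparatedCover_eq (k : ℕ) :
    greedySeparatedCover r S k = maximalSeparatedSet (r k)
      (S k \ ⋃ i < k, ⋃ p ∈ greedySeparatedCover r S i, closedBall p (r i)) := by
  rw [greedySeparatedCover, Nat.strongRec_eq]
  rfl

lemma greedySeparatedCover_subset (k : ℕ) : greedySeparatedCover r S k ⊆ S k := by
  rw [greedySeparatedCover_eq]
  exact maximalSeparatedSet_subset.trans Set.sdiff_subset

lemma finite_greedySeparatedCover (k : ℕ) : (greedySeparatedCover r S k).Finite := by
  rw [greedySeparatedCover_eq]
  exact finite_maximalSeparatedSet _ _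

variable {r S}

lemma lt_dist_of_mem_greedySeparatedCover_of_lt {i k : ℕ} {p q : X} (hik : i < k)
    (hp : p ∈ greedySeparatedCover r S i) (hq : q ∈ greedySeparatedCover r S k) :
    (r i : ℝ) < dist p q := by
  rw [greedySeparatedCover_eq] at hq
  have hq_new := (maximalSeparatedSet_subset hq).2
  simp only [Set.mem_iUnion, mem_closedBall, not_exists, not_le] at hq_new
  rw [dist_comm]
  exact hq_new i hik p hp

lemma max_lt_dist_of_mem_greedySeparatedCover (hr : Antitone r) {i k : ℕ} {p q : X}
    (hp : p ∈ greedySeparatedCover r S i) (hq : q ∈ greedySeparatedCover r S k) (hpq : p ≠ q) :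
    max (r i : ℝ) (r k) < dist p q := by
  wlog hik : i ≤ k generalizing i k p q
  · rw [max_comm, dist_comm]
    exact this hq hp hpq.symm (le_of_not_ge hik)
  rw [max_eq_left (NNReal.coe_le_coe.mpr (hr hik))]
  rcases hik.lt_or_eq with hik | rfl
  · exact lt_dist_of_mem_greedySeparatedCover_of_lt hik hp hq
  · rw [greedySeparatedCover_eq] at hp hq
    exact isSeparated_coe_iff.mp isSeparated_maximalSeparatedSet hp hq hpq

lemma isCover_greedySeparatedCover (hr : ∀ k, r k ≠ 0) (hS : ∀ k, TotallyBounded (S k))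
    (k : ℕ) : IsCover (r k) (S k \ ⋃ i < k, ⋃ p ∈ greedySeparatedCover r S i, closedBall p (r i))
      (greedySeparatedCover r S k) := by
  rw [greedySeparatedCover_eq]
  exact isCover_maximalSeparatedSet
    (packingNumber_ne_top_of_totallyBounded (hr k) ((hS k).subset Set.sdiff_subset))

lemma iUnion_le_subset_iUnion_greedySeparatedCover (hr : ∀ k, r k ≠ 0)
    (hS : ∀ k, TotallyBounded (S k)) (k : ℕ) :
    ⋃ i ≤ k, S i ⊆ ⋃ i ≤ k, ⋃ p ∈ greedySeparatedCover r S i, closedBall p (r i) := by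
  refine Set.iUnion₂_subset fun j hjk x hx => ?_
  by_cases hold : x ∈ ⋃ i < j, ⋃ p ∈ greedySeparatedCover r S i, closedBall p (r i)
  · exact Set.biUnion_subset_biUnion_left (fun i (hi : i < j) => hi.le.trans hjk) hold
  · have hnew := (isCover_greedySeparatedCover hr hS j).subset_iUnion_closedBall ⟨hx, hold⟩
    exact Set.mem_biUnion hjk hnew

end GreedySeparatedCover

end Metric

theorem self_similar_cover_exists_general {X : Type*} [MetricSpace X] [CompactSpace X]
    (s : ℝ) (hs0 : 0 < s) (hs : s < 1 / 100) (Sig : ℕ → Set X) :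
    ∃ Afam : ℕ → Finset X,
      (∀ i, ↑(Afam i) ⊆ Sig i) ∧
      (∀ i k : ℕ, ∀ p ∈ Afam i, ∀ q ∈ Afam k, p ≠ q → max (s ^ i) (s ^ k) < dist p q) ∧
      (∀ k : ℕ, (⋃ i ≤ k, Sig i) ⊆ ⋃ i ≤ k, ⋃ p ∈ Afam i, closedBall p (s ^ i)) := by
  obtain ⟨r, hr_coe⟩ : ∃ r : ℕ → ℝ≥0, ∀ i, (r i : ℝ) = s ^ i :=
    ⟨fun i => ⟨s ^ i, by positivity⟩, fun _ => rfl⟩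
  have hr_anti : Antitone r := fun i k hik => by
    rw [← NNReal.coe_le_coe, hr_coe, hr_coe]
    exact pow_le_pow_of_le_one hs0.le (by linarith) hik
  have hr_ne : ∀ i, r i ≠ 0 := fun i => by
    rw [← NNReal.coe_ne_zero, hr_coe]
    positivity
  have hS : ∀ k, TotallyBounded (Sig k) :=
    fun k => isCompact_univ.totallyBounded.subset (Set.subset_univ _)
  refine ⟨fun i => (finite_greedySeparatedCover r Sig i).toFinset,
    fun i => by simpa using greedySeparatedCover_subset r Sig i, ?_, ?_⟩
  · intro i k p hp q hq hpq
    simpa [hr_coe] using max_lt_dist_of_mem_greedySeparatedCover hr_anti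
      (by simpa using hp) (by simpa using hq) hpq
  · simpa [hr_coe] using iUnion_le_subset_iUnion_greedySeparatedCover hr_ne hS

/-- First half of Proposition 3.5 (Self-Similar Covers): in a compact metric space with a
finite Borel measure satisfying the lower Ahlfors bound `A·rⁿ ≤ μ(closedBall(x,r))` for
`r ∈ (0,1]`, given `s ∈ (0,1/100)` and subsets `Σᵢ`, one can select finite subsets
`Aᵢ ⊆ Σᵢ` whose points are mutually `max(sⁱ, sᵏ)`-separated and whose closed `sⁱ`-balls
cover `⋃_{i ≤ k} Σᵢ` layer by layer. -/
theorem self_similar_cover_exists {X : Type*} [MetricSpace X] [CompactSpace X]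
    [MeasurableSpace X] [BorelSpace X] (μ : Measure X) [IsFiniteMeasure μ]
    (n : ℕ) (hn : 1 ≤ n) (A : ℝ) (hA : 0 < A)
    (hreg : ∀ (x : X) (r : ℝ), 0 < r → r ≤ 1 →
      ENNReal.ofReal (A * r ^ n) ≤ μ (closedBall x r))
    (s : ℝ) (hs0 : 0 < s) (hs : s < 1 / 100) (Sig : ℕ → Set X) :
    ∃ Afam : ℕ → Finset X,
      (∀ i, ↑(Afam i) ⊆ Sig i) ∧
      (∀ i k : ℕ, ∀ p ∈ Afam i, ∀ q ∈ Afam k, p ≠ q → max (s ^ i) (s ^ k) < dist p q) ∧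
      (∀ k : ℕ, (⋃ i ≤ k, Sig i) ⊆ ⋃ i ≤ k, ⋃ p ∈ Afam i, closedBall p (s ^ i)) :=
  self_similar_cover_exists_general s hs0 hs Sig
end

section
/- Let k ≥ 2 be an integer, λ > 0, and let α∘, α• be real numbers with α∘ − α• > 2. Let φ : ℝ → ℝ be a C² function with φ(t) = 1 for t ≤ 0, φ(t) = 0 for t ≥ 1, and 0 ≤ φ ≤ 1. Then there exists D₀ ≥ 1 such that for every D ≥ D₀ and every ρ > 0, writing φ_D(ρ) := φ(ρ − D), one has λ·ρ^{−2}·(ρ^{α∘} + φ_D(ρ)·ρ^{α•}) − (φ_D''(ρ) + ((k−1)/ρ)·φ_D'(ρ))·ρ^{α•} − 2·α•·φ_D'(ρ)·ρ^{α•−1} > 0. -/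
/-!
On the transition region `ρ - D ∈ [0, 1]` the derivatives of `φ` are bounded by a constant `M`,
and since `ρ ≥ 1` there, every error term is at most a constant times `ρ ^ αb`, while the leading
term is `lam * ρ ^ (αo - 2) = lam * ρ ^ (αo - αb - 2) * ρ ^ αb`. As `αo - αb - 2 > 0`, the leading
term wins once `D` is large. Outside the transition region both derivatives of `φ` vanish and the
expression is manifestly positive.
-/

open Real Set Filter Function Topology

lemma support_deriv_subset_Icc {f : ℝ → ℝ} {a b c₀ c₁ : ℝ} (h₀ : ∀ t, t ≤ a → f t = c₀)
    (h₁ : ∀ t, b ≤ t → f t = c₁) : support (deriv f) ⊆ Icc a b := by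
  intro t ht
  by_contra hIcc
  refine ht ?_
  rcases not_and_or.mp hIcc with hta | htb
  · have : f =ᶠ[𝓝 t] fun _ => c₀ := by
      filter_upwards [Iio_mem_nhds (not_le.mp hta)] with x hx using h₀ x hx.le
    rw [this.deriv_eq, deriv_const]
  · have : f =ᶠ[𝓝 t] fun _ => c₁ := by
      filter_upwards [Ioi_mem_nhds (not_le.mp htb)] with x hx using h₁ x hx.le
    rw [this.deriv_eq, deriv_const]

lemma deriv_eq_zero_and_deriv_deriv_eq_zero_of_notMem_Icc {f : ℝ → ℝ} {a b c₀ c₁ t : ℝ}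
    (h₀ : ∀ t, t ≤ a → f t = c₀) (h₁ : ∀ t, b ≤ t → f t = c₁) (ht : t ∉ Icc a b) :
    deriv f t = 0 ∧ deriv (deriv f) t = 0 := by
  have hsupp := support_deriv_subset_Icc h₀ h₁
  have htsupp : tsupport (deriv f) ⊆ Icc a b := closure_minimal hsupp isClosed_Icc
  exact ⟨notMem_support.mp fun h => ht (hsupp h),
    notMem_support.mp fun h => ht (htsupp (support_deriv_subset h))⟩

lemma exists_bound_deriv_deriv_on_Icc {f : ℝ → ℝ} (hf : ContDiff ℝ 2 f) (a b : ℝ) :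
    ∃ M, ∀ t ∈ Icc a b, |deriv f t| ≤ M ∧ |deriv (deriv f) t| ≤ M := by
  have hcont : Continuous fun t => |deriv f t| + |deriv (deriv f) t| :=
    ((hf.continuous_deriv one_le_two).abs).add (hf.deriv' (n := 1)).continuous_deriv_one.abs
  obtain ⟨M, hM⟩ := (isCompact_Icc (a := a) (b := b)).exists_bound_of_continuousOn
    hcont.continuousOn
  refine ⟨M, fun t ht => ?_⟩
  have hMt := (le_abs_self _).trans (hM t ht)
  exact ⟨by linarith [abs_nonneg (deriv (deriv f) t)], by linarith [abs_nonneg (deriv f t)]⟩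

lemma transition_error_le {ρ M a b κ β : ℝ} (hρ : 1 ≤ ρ) (ha : |a| ≤ M) (hb : |b| ≤ M) :
    (b + κ / ρ * a) * ρ ^ β + 2 * β * a * ρ ^ (β - 1) ≤ M * (1 + |κ| + 2 * |β|) * ρ ^ β := by
  have hρ0 : 0 < ρ := one_pos.trans_le hρ
  have hsplit : (b + κ / ρ * a) * ρ ^ β + 2 * β * a * ρ ^ (β - 1)
      = (b + (κ + 2 * β) * a / ρ) * ρ ^ β := by
    rw [rpow_sub_one hρ0.ne']
    field_simp
    ring
  have hM : 0 ≤ M := (abs_nonneg a).trans ha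
  have hcoeff : |(κ + 2 * β) * a / ρ| ≤ (|κ| + 2 * |β|) * M := by
    rw [abs_div, abs_of_pos hρ0, abs_mul, div_le_iff₀ hρ0]
    have hκβ : |κ + 2 * β| ≤ |κ| + 2 * |β| := by
      simpa [abs_mul] using abs_add_le κ (2 * β)
    calc |κ + 2 * β| * |a| ≤ (|κ| + 2 * |β|) * M := by gcongr
      _ ≤ (|κ| + 2 * |β|) * M * ρ := le_mul_of_one_le_right (by positivity) hρ
  rw [hsplit]
  gcongr
  calc b + (κ + 2 * β) * a / ρ ≤ |b| + |(κ + 2 * β) * a / ρ| :=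
        add_le_add (le_abs_self _) (le_abs_self _)
    _ ≤ M * (1 + |κ| + 2 * |β|) := by linarith

lemma eventually_lt_mul_rpow {ε lam : ℝ} (hε : 0 < ε) (hlam : 0 < lam) (C : ℝ) :
    ∀ᶠ ρ in atTop, C < lam * ρ ^ ε := by
  filter_upwards [(tendsto_rpow_atTop hε).eventually_gt_atTop (C / lam)] with ρ hρ
  rwa [div_lt_iff₀' hlam] at hρ

theorem transition_outward_positive_general (k : ℕ) (lam : ℝ) (hlam : 0 < lam)
    (αo αb : ℝ) (hab : 2 < αo - αb)
    (φ : ℝ → ℝ) (hφ : ContDiff ℝ 2 φ)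
    (hφ0 : ∀ t : ℝ, t ≤ 0 → φ t = 1) (hφ1 : ∀ t : ℝ, 1 ≤ t → φ t = 0)
    (hφrange : ∀ t : ℝ, 0 ≤ φ t ∧ φ t ≤ 1) :
    ∃ D₀ : ℝ, 1 ≤ D₀ ∧ ∀ D : ℝ, D₀ ≤ D → ∀ ρ : ℝ, 0 < ρ →
      0 < lam * ρ ^ (-2 : ℝ) * (ρ ^ αo + φ (ρ - D) * ρ ^ αb) -
          (deriv (deriv φ) (ρ - D) + ((k : ℝ) - 1) / ρ * deriv φ (ρ - D)) * ρ ^ αb -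
          2 * αb * deriv φ (ρ - D) * ρ ^ (αb - 1) := by
  obtain ⟨M, hM⟩ := exists_bound_deriv_deriv_on_Icc hφ 0 1
  obtain ⟨R, hR⟩ := eventually_atTop.mp <| eventually_lt_mul_rpow (sub_pos.mpr hab) hlam
    (M * (1 + |(k : ℝ) - 1| + 2 * |αb|))
  refine ⟨max 1 R, le_max_left _ _, fun D hD ρ hρ => ?_⟩
  have hφρ : 0 ≤ φ (ρ - D) * ρ ^ αb := mul_nonneg (hφrange (ρ - D)).1 (rpow_pos_of_pos hρ αb).le
  have hleading : lam * ρ ^ (-2 : ℝ) * ρ ^ αo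
      ≤ lam * ρ ^ (-2 : ℝ) * (ρ ^ αo + φ (ρ - D) * ρ ^ αb) := by
    gcongr
    linarith
  have hleading_pos : 0 < lam * ρ ^ (-2 : ℝ) * ρ ^ αo := by positivity
  by_cases ht : ρ - D ∈ Icc 0 1
  swap
  · obtain ⟨hd, hdd⟩ := deriv_eq_zero_and_deriv_deriv_eq_zero_of_notMem_Icc hφ0 hφ1 ht
    simp only [hd, hdd, mul_zero, add_zero, zero_mul, sub_zero]
    linarith
  have hDρ : max 1 R ≤ ρ := hD.trans (by linarith [ht.1])
  have herror := transition_error_le (κ := (k : ℝ) - 1) (β := αb)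
    ((le_max_left _ _).trans hDρ) (hM _ ht).1 (hM _ ht).2
  have hgain : lam * ρ ^ (-2 : ℝ) * ρ ^ αo = lam * ρ ^ (αo - αb - 2) * ρ ^ αb := by
    rw [mul_assoc, mul_assoc, ← rpow_add hρ, ← rpow_add hρ]
    ring_nf
  have hwin := mul_lt_mul_of_pos_right (hR ρ ((le_max_right _ _).trans hDρ))
    (rpow_pos_of_pos hρ αb)
  linarith

/-- Positivity estimate (2.13) in Step 1 of Proposition 2.2 (Basic Deformations): the
transition from `Ψ∘` to `Ψ∘ + Ψ•` via the cutoff `φ_D(ρ) = φ(ρ − D)`, performed at a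
sufficiently large radius `D`, keeps the scalar curvature expression positive. Here
`ρ ^ α` is the real power `Real.rpow`. -/
theorem transition_outward_positive (k : ℕ) (hk : 2 ≤ k) (lam : ℝ) (hlam : 0 < lam)
    (αo αb : ℝ) (hab : 2 < αo - αb)
    (φ : ℝ → ℝ) (hφ : ContDiff ℝ 2 φ)
    (hφ0 : ∀ t : ℝ, t ≤ 0 → φ t = 1) (hφ1 : ∀ t : ℝ, 1 ≤ t → φ t = 0)
    (hφrange : ∀ t : ℝ, 0 ≤ φ t ∧ φ t ≤ 1) :
    ∃ D₀ : ℝ, 1 ≤ D₀ ∧ ∀ D : ℝ, D₀ ≤ D → ∀ ρ : ℝ, 0 < ρ →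
      0 < lam * ρ ^ (-2 : ℝ) * (ρ ^ αo + φ (ρ - D) * ρ ^ αb) -
          (deriv (deriv φ) (ρ - D) + ((k : ℝ) - 1) / ρ * deriv φ (ρ - D)) * ρ ^ αb -
          2 * αb * deriv φ (ρ - D) * ρ ^ (αb - 1) :=
  transition_outward_positive_general k lam hlam αo αb hab φ hφ hφ0 hφ1 hφrange
end

section
/- Let k ≥ 2 be an integer, λ > 0, and let α∘, α• be real numbers with α∘ > α•. Let φ : ℝ → ℝ be a C² function with φ(t) = 1 for t ≤ 0, φ(t) = 0 for t ≥ 1, and 0 ≤ φ ≤ 1. Then there exists E₀ ∈ (0, 1) such that for every E ∈ (0, E₀] and every ρ > 0, writing φ_E(ρ) := 1 − φ(ρ/E − 1), one has λ·ρ^{−2}·(φ_E(ρ)·ρ^{α∘} + ρ^{α•}) − (φ_E''(ρ) + ((k−1)/ρ)·φ_E'(ρ))·ρ^{α∘} − 2·α∘·φ_E'(ρ)·ρ^{α∘−1} > 0. -/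
/-!
Factoring out `ρ ^ (αo - 2)` leaves `λ (1 - φ) + λ ρ ^ (αb - αo)` minus the Euler operator
`ρ² ∂² + (k - 1 + 2 αo) ρ ∂` applied to the cutoff. By scaling, the latter is a fixed continuous
function of `ρ / E`: bounded for `ρ ≤ 2E` and zero beyond. Since `λ ρ ^ (αb - αo) → ∞` as `ρ → 0`,
it dominates on `(0, 2E]` once `E` is small.
-/

open Filter Topology Set

theorem deriv_comp_div_sub_const (φ : ℝ → ℝ) (E a : ℝ) :
    deriv (fun t => φ (t / E - a)) = fun t => deriv φ (t / E - a) / E := by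
  funext t
  simp only [div_eq_inv_mul]
  rw [deriv_comp_mul_left E⁻¹ (fun s => φ (s - a)) t, deriv_comp_sub_const, smul_eq_mul]

theorem exists_forall_lt_mul_rpow_of_neg {lam s : ℝ} (hlam : 0 < lam) (hs : s < 0) (M : ℝ) :
    ∃ δ > 0, ∀ ρ, 0 < ρ → ρ ≤ δ → M < lam * ρ ^ s := by
  have h : ∀ᶠ ρ in 𝓝[>] (0 : ℝ), M / lam < ρ ^ s :=
    (tendsto_rpow_neg_nhdsGT_zero hs).eventually_gt_atTop _
  obtain ⟨δ, hδ, hsub⟩ := mem_nhdsGT_iff_exists_Ioc_subset.mp h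
  exact ⟨δ, hδ, fun ρ hρ hρδ => (div_lt_iff₀' hlam).mp (hsub ⟨hρ, hρδ⟩)⟩

theorem rpow_combination_eq_rpow_sub_two_mul {ρ : ℝ} (hρ : 0 < ρ) (lam a b κ F D₁ D₂ : ℝ) :
    lam * ρ ^ (-2 : ℝ) * (F * ρ ^ a + ρ ^ b) - (D₂ + κ / ρ * D₁) * ρ ^ a -
        2 * a * D₁ * ρ ^ (a - 1) =
      ρ ^ (a - 2) * (lam * F + lam * ρ ^ (b - a) - (ρ ^ 2 * D₂ + (κ + 2 * a) * ρ * D₁)) := by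
  have h2 : ρ ^ (2 : ℝ) = ρ ^ 2 := Real.rpow_natCast ρ 2
  have ha : ρ ^ a = ρ ^ (a - 2) * ρ ^ 2 := by
    rw [← h2, ← Real.rpow_add hρ]; ring_nf
  have ha1 : ρ ^ (a - 1) = ρ ^ (a - 2) * ρ := by
    rw [← Real.rpow_add_one hρ.ne']; ring_nf
  have hb : ρ ^ b = ρ ^ (b - a) * ρ ^ a := by
    rw [← Real.rpow_add hρ]; ring_nf
  have hm2 : ρ ^ (-2 : ℝ) = (ρ ^ 2)⁻¹ := by rw [Real.rpow_neg hρ.le, h2]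
  rw [hb, ha, ha1, hm2]
  field_simp
  ring

/-- Minus the Euler operator `ρ² ∂² + c ρ ∂` applied to `1 - φ (ρ / E - 1)`, written in the
variable `u = ρ / E - 1`, in which it no longer depends on `E`. -/
noncomputable def shiftedEuler (φ : ℝ → ℝ) (c u : ℝ) : ℝ :=
  (u + 1) ^ 2 * deriv (deriv φ) u + c * (u + 1) * deriv φ u

section

variable {φ : ℝ → ℝ}

theorem sq_mul_deriv_deriv_add_mul_deriv_eq_neg_shiftedEuler {E : ℝ} (hE : E ≠ 0) (c ρ : ℝ) :
    ρ ^ 2 * deriv (deriv fun t => 1 - φ (t / E - 1)) ρ +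
        c * ρ * deriv (fun t => 1 - φ (t / E - 1)) ρ =
      -shiftedEuler φ c (ρ / E - 1) := by
  simp only [deriv_const_sub', deriv.fun_neg, deriv_div_const, deriv_comp_div_sub_const,
    shiftedEuler, sub_add_cancel]
  field_simp
  ring

theorem continuous_shiftedEuler (hφ : ContDiff ℝ 2 φ) (c : ℝ) :
    Continuous (shiftedEuler φ c) := by
  have hφ' : ContDiff ℝ 1 (deriv φ) := hφ.deriv'
  have hφ'' : Continuous (deriv (deriv φ)) := hφ'.continuous_deriv le_rfl
  unfold shiftedEuler
  fun_prop

theorem shiftedEuler_eq_zero_of_one_lt (hφ1 : ∀ t, 1 ≤ t → φ t = 0) (c : ℝ) {u : ℝ}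
    (hu : 1 < u) : shiftedEuler φ c u = 0 := by
  have hφ : φ =ᶠ[𝓝 u] fun _ => 0 :=
    eventually_of_mem (Ioi_mem_nhds hu) fun t ht => hφ1 t (le_of_lt ht)
  have hφ' : deriv φ =ᶠ[𝓝 u] fun _ => 0 := by simpa using hφ.deriv
  simp [shiftedEuler, hφ'.eq_of_nhds, hφ'.deriv_eq]

end

theorem transition_inward_positive_general (k : ℕ) (lam : ℝ) (hlam : 0 < lam)
    (αo αb : ℝ) (hab : αb < αo)
    (φ : ℝ → ℝ) (hφ : ContDiff ℝ 2 φ)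
    (hφ1 : ∀ t : ℝ, 1 ≤ t → φ t = 0)
    (hφrange : ∀ t : ℝ, 0 ≤ φ t ∧ φ t ≤ 1) :
    ∃ E₀ : ℝ, 0 < E₀ ∧ E₀ < 1 ∧ ∀ E : ℝ, 0 < E → E ≤ E₀ → ∀ ρ : ℝ, 0 < ρ →
      0 < lam * ρ ^ (-2 : ℝ) * ((1 - φ (ρ / E - 1)) * ρ ^ αo + ρ ^ αb) -
          (deriv (deriv fun t : ℝ => 1 - φ (t / E - 1)) ρ +
            ((k : ℝ) - 1) / ρ * deriv (fun t : ℝ => 1 - φ (t / E - 1)) ρ) * ρ ^ αo -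
          2 * αo * deriv (fun t : ℝ => 1 - φ (t / E - 1)) ρ * ρ ^ (αo - 1) := by
  obtain ⟨m, hm⟩ := (isCompact_Icc (a := (-1 : ℝ)) (b := 1)).bddBelow_image
    (continuous_shiftedEuler hφ ((k : ℝ) - 1 + 2 * αo)).continuousOn
  obtain ⟨δ, hδ, hsmall⟩ := exists_forall_lt_mul_rpow_of_neg hlam (sub_neg.2 hab) (-m)
  refine ⟨min (1 / 2) (δ / 2), by positivity, (min_le_left _ _).trans_lt (by norm_num),
    fun E hE hEδ ρ hρ => ?_⟩
  rw [rpow_combination_eq_rpow_sub_two_mul hρ,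
    sq_mul_deriv_deriv_add_mul_deriv_eq_neg_shiftedEuler hE.ne']
  refine mul_pos (Real.rpow_pos_of_pos hρ _) ?_
  have hF : 0 ≤ lam * (1 - φ (ρ / E - 1)) := mul_nonneg hlam.le (sub_nonneg.2 (hφrange _).2)
  have hρE : 0 < ρ / E := div_pos hρ hE
  rcases le_or_gt ρ (2 * E) with hnear | hfar
  · have hu : ρ / E - 1 ∈ Icc (-1) 1 :=
      ⟨by linarith, by linarith [(div_le_iff₀ hE).2 hnear]⟩
    have hbound := hm ⟨_, hu, rfl⟩
    have hdom := hsmall ρ hρ (by linarith [min_le_right (1 / 2 : ℝ) (δ / 2)])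
    linarith
  · rw [shiftedEuler_eq_zero_of_one_lt hφ1 _ (by linarith [(lt_div_iff₀ hE).2 hfar])]
    have := mul_pos hlam (Real.rpow_pos_of_pos hρ (αb - αo))
    linarith

/-- Positivity estimate (2.14) in Step 1 of Proposition 2.2 (Basic Deformations): the
transition from `Ψ∘ + Ψ•` to `Ψ•` via the cutoff `φ_E(ρ) = 1 − φ(ρ/E − 1)`, performed at
a sufficiently small radius `E`, keeps the scalar curvature expression positive. Here
`ρ ^ α` is the real power `Real.rpow`. -/
theorem transition_inward_positive (k : ℕ) (hk : 2 ≤ k) (lam : ℝ) (hlam : 0 < lam)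
    (αo αb : ℝ) (hab : αb < αo)
    (φ : ℝ → ℝ) (hφ : ContDiff ℝ 2 φ)
    (hφ0 : ∀ t : ℝ, t ≤ 0 → φ t = 1) (hφ1 : ∀ t : ℝ, 1 ≤ t → φ t = 0)
    (hφrange : ∀ t : ℝ, 0 ≤ φ t ∧ φ t ≤ 1) :
    ∃ E₀ : ℝ, 0 < E₀ ∧ E₀ < 1 ∧ ∀ E : ℝ, 0 < E → E ≤ E₀ → ∀ ρ : ℝ, 0 < ρ →
      0 < lam * ρ ^ (-2 : ℝ) * ((1 - φ (ρ / E - 1)) * ρ ^ αo + ρ ^ αb) -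
          (deriv (deriv fun t : ℝ => 1 - φ (t / E - 1)) ρ +
            ((k : ℝ) - 1) / ρ * deriv (fun t : ℝ => 1 - φ (t / E - 1)) ρ) * ρ ^ αo -
          2 * αo * deriv (fun t : ℝ => 1 - φ (t / E - 1)) ρ * ρ ^ (αo - 1) :=
  transition_inward_positive_general k lam hlam αo αb hab φ hφ hφ1 hφrange
end

section
/- Let k ≥ 2 be an integer, λ > 0, and α ∈ ℝ. Let φ : ℝ → ℝ be a C² function with φ(t) = 1 for t ≤ 0, φ(t) = 0 for t ≥ 1, and 0 ≤ φ ≤ 1. For d ∈ ℤ and ρ > 0 set h_d(ρ) := φ(2^d·ρ − 1), so that h_d'(ρ) = 2^d·φ'(2^d·ρ − 1) and h_d''(ρ) = 2^{2d}·φ''(2^d·ρ − 1). Then there exists ζ₀ ∈ (0, 1/2), depending only on λ, k, |α| and the bounds on φ' and φ'', such that for every ζ ∈ [−ζ₀, 0), every d ∈ ℤ, and every ρ > 0, one has λ·ρ^{−2}·(1 + ζ·h_d(ρ)) − |ζ|·|h_d''(ρ) + ((k−1)/ρ)·h_d'(ρ)| − 2·|ζ|·|α|·|h_d'(ρ)|·ρ^{−1}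 > 0. -/
/-!
Writing `s = 2^d·ρ`, the whole expression equals `ρ⁻² · F(s)`, where `F` no longer involves
`d` or `ρ`: the derivative terms become `s²·φ''(s − 1)` and `s·φ'(s − 1)`. These vanish unless
`s ∈ [1, 2]`, so they are bounded by `4‖φ''‖∞` and `2‖φ'‖∞`, while `1 + ζ·φ ≥ 1/2`. Hence a
small `|ζ|`, chosen once for all scales, makes `F` positive.
-/

open Set Function

lemma eqOn_deriv_zero_of_eqOn_const {𝕜 F : Type*} [NontriviallyNormedField 𝕜]
    [NormedAddCommGroup F] [NormedSpace 𝕜 F] {f : 𝕜 → F} {s : Set 𝕜} {c : F} (hs : IsOpen s)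
    (h : EqOn f (fun _ => c) s) : EqOn (deriv f) 0 s := fun t ht => by
  rw [h.deriv hs ht, deriv_const, Pi.zero_apply]

lemma support_subset_Icc_of_eqOn_zero {ι M : Type*} [LinearOrder ι] [Zero M] {g : ι → M}
    {a b : ι} (ha : EqOn g 0 (Iio a)) (hb : EqOn g 0 (Ioi b)) : support g ⊆ Icc a b :=
  support_subset_iff'.2 fun t ht => by
    rcases not_and_or.1 ht with h | h
    · exact ha (not_le.1 h)
    · exact hb (not_le.1 h)

lemma support_deriv_deriv_subset_Icc {F : Type*} [NormedAddCommGroup F] [NormedSpace ℝ F]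
    {f : ℝ → F} {a b : ℝ} {c₁ c₂ : F}
    (ha : EqOn f (fun _ => c₁) (Iio a)) (hb : EqOn f (fun _ => c₂) (Ioi b)) :
    support (deriv f) ⊆ Icc a b ∧ support (deriv (deriv f)) ⊆ Icc a b := by
  have ha' := eqOn_deriv_zero_of_eqOn_const isOpen_Iio ha
  have hb' := eqOn_deriv_zero_of_eqOn_const isOpen_Ioi hb
  exact ⟨support_subset_Icc_of_eqOn_zero ha' hb',
    support_subset_Icc_of_eqOn_zero (eqOn_deriv_zero_of_eqOn_const isOpen_Iio ha')
      (eqOn_deriv_zero_of_eqOn_const isOpen_Ioi hb')⟩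

lemma exists_abs_le_of_support_subset_Icc {g : ℝ → ℝ} {a b : ℝ} (hg : Continuous g)
    (hsupp : support g ⊆ Icc a b) : ∃ M, ∀ t, |g t| ≤ M :=
  hg.bounded_above_of_compact_support
    (HasCompactSupport.intro isCompact_Icc (support_subset_iff'.1 hsupp))

lemma abs_pow_mul_comp_sub_one_le {g : ℝ → ℝ} {M : ℝ} (hsupp : support g ⊆ Icc 0 1)
    (hM : ∀ t, |g t| ≤ M) (n : ℕ) (s : ℝ) : |s ^ n * g (s - 1)| ≤ 2 ^ n * M := by
  by_cases hs : s - 1 ∈ Icc (0 : ℝ) 1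
  · have hs₂ : |s| ≤ 2 := abs_le.2 ⟨by linarith [hs.1], by linarith [hs.2]⟩
    rw [abs_mul, abs_pow]
    exact mul_le_mul (pow_le_pow_left₀ (abs_nonneg s) hs₂ n) (hM _) (abs_nonneg _)
      (by positivity)
  · rw [support_subset_iff'.1 hsupp _ hs, mul_zero, abs_zero]
    exact mul_nonneg (by positivity) ((abs_nonneg _).trans (hM 0))

lemma dyadic_rescale (lam ζ α κ u a b x ρ : ℝ) (hρ : 0 < ρ) :
    lam * ρ ^ (-2 : ℝ) * u - |ζ| * |x ^ 2 * a + κ / ρ * (x * b)| -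
        2 * |ζ| * |α| * |x * b| * ρ⁻¹ =
      (ρ ^ 2)⁻¹ * (lam * u - |ζ| * |(x * ρ) ^ 2 * a + κ * ((x * ρ) * b)| -
        2 * |ζ| * |α| * |(x * ρ) * b|) := by
  have h₁ : x ^ 2 * a + κ / ρ * (x * b) =
      (ρ ^ 2)⁻¹ * ((x * ρ) ^ 2 * a + κ * ((x * ρ) * b)) := by field_simp
  have h₂ : x * b = ρ⁻¹ * ((x * ρ) * b) := by field_simp
  rw [Real.rpow_neg hρ.le, Real.rpow_two, h₁, h₂, abs_mul, abs_mul (ρ⁻¹),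
    abs_of_pos (by positivity : (0 : ℝ) < (ρ ^ 2)⁻¹), abs_of_pos (inv_pos.2 hρ)]
  ring

lemma curvature_profile_pos {lam ζ α κ p a b A B : ℝ} (hlam : 0 < lam) (hp : |p| ≤ 1)
    (ha : |a| ≤ A) (hb : |b| ≤ B) (hζ : |ζ| ≤ 1 / 2)
    (hsmall : |ζ| * (A + |κ| * B + 2 * |α| * B) < lam / 2) :
    0 < lam * (1 + ζ * p) - |ζ| * |a + κ * b| - 2 * |ζ| * |α| * |b| := by
  have hmain : lam / 2 ≤ lam * (1 + ζ * p) := by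
    have : |ζ * p| ≤ 1 / 2 := by
      rw [abs_mul]; nlinarith [abs_nonneg ζ, abs_nonneg p]
    nlinarith [neg_abs_le (ζ * p)]
  have hab : |a + κ * b| ≤ A + |κ| * B :=
    (abs_add_le _ _).trans (add_le_add ha (by rw [abs_mul]; gcongr))
  have hζ₀ := abs_nonneg ζ
  nlinarith [mul_le_mul_of_nonneg_left hab hζ₀,
    mul_le_mul_of_nonneg_left hb (mul_nonneg (mul_nonneg zero_le_two hζ₀) (abs_nonneg α))]

theorem dyadic_cutoff_positive_general (k : ℕ) (lam : ℝ) (hlam : 0 < lam) (α : ℝ)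
    (φ : ℝ → ℝ) (hφ : ContDiff ℝ 2 φ)
    (hφ0 : ∀ t : ℝ, t ≤ 0 → φ t = 1) (hφ1 : ∀ t : ℝ, 1 ≤ t → φ t = 0)
    (hφrange : ∀ t : ℝ, 0 ≤ φ t ∧ φ t ≤ 1) :
    ∃ ζ₀ : ℝ, 0 < ζ₀ ∧ ζ₀ < 1 / 2 ∧
      ∀ ζ : ℝ, -ζ₀ ≤ ζ → ζ < 0 → ∀ d : ℤ, ∀ ρ : ℝ, 0 < ρ →
        0 < lam * ρ ^ (-2 : ℝ) * (1 + ζ * φ ((2 : ℝ) ^ d * ρ - 1)) -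
            |ζ| * |(2 : ℝ) ^ (2 * d) * deriv (deriv φ) ((2 : ℝ) ^ d * ρ - 1) +
                ((k : ℝ) - 1) / ρ * ((2 : ℝ) ^ d * deriv φ ((2 : ℝ) ^ d * ρ - 1))| -
            2 * |ζ| * |α| * |(2 : ℝ) ^ d * deriv φ ((2 : ℝ) ^ d * ρ - 1)| * ρ⁻¹ := by
  obtain ⟨hsupp₁, hsupp₂⟩ := support_deriv_deriv_subset_Icc
    (fun t ht => hφ0 t ht.le) (fun t ht => hφ1 t ht.le)
  have hφ' : ContDiff ℝ 1 (deriv φ) := hφ.iterate_deriv' 1 1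
  obtain ⟨M₁, hM₁⟩ := exists_abs_le_of_support_subset_Icc hφ'.continuous hsupp₁
  obtain ⟨M₂, hM₂⟩ := exists_abs_le_of_support_subset_Icc (hφ'.continuous_deriv le_rfl) hsupp₂
  set C := 2 ^ 2 * M₂ + |(k : ℝ) - 1| * (2 ^ 1 * M₁) + 2 * |α| * (2 ^ 1 * M₁)
  have hC : 0 ≤ C := by
    have := (abs_nonneg _).trans (hM₁ 0); have := (abs_nonneg _).trans (hM₂ 0); positivity
  have hζ₀_half : lam / (2 * (C + lam + 1)) < 1 / 2 := by
    rw [div_lt_iff₀ (by positivity)]; linarith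
  refine ⟨lam / (2 * (C + lam + 1)), by positivity, hζ₀_half, fun ζ hζ₀ hζ d ρ hρ => ?_⟩
  have hζ_abs : |ζ| ≤ lam / (2 * (C + lam + 1)) := by rw [abs_of_neg hζ]; linarith
  have hζC : |ζ| * C < lam / 2 := by
    calc |ζ| * C ≤ lam / (2 * (C + lam + 1)) * C := by gcongr
      _ < lam / 2 := by
        rw [div_mul_eq_mul_div, div_lt_div_iff₀ (by positivity) two_pos]; nlinarith
  rw [mul_comm 2 d, zpow_mul, zpow_two, ← sq, dyadic_rescale _ _ _ _ _ _ _ _ _ hρ]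
  refine mul_pos (by positivity) (curvature_profile_pos hlam ?_
    (abs_pow_mul_comp_sub_one_le hsupp₂ hM₂ 2 _)
    (by simpa using abs_pow_mul_comp_sub_one_le hsupp₁ hM₁ 1 (2 ^ d * ρ)) (by linarith) hζC)
  obtain ⟨h₀, h₁⟩ := hφrange (2 ^ d * ρ - 1)
  exact abs_le.2 ⟨by linarith, h₁⟩

/-- Positivity estimate (2.21) in Step 3 of Proposition 2.2 (Basic Deformations): for the
dyadic cutoffs `h_d(ρ) = φ(2^d·ρ − 1)`, with `h_d'(ρ) = 2^d·φ'(2^d·ρ − 1)` and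
`h_d''(ρ) = 2^{2d}·φ''(2^d·ρ − 1)`, there is a `ζ₀ ∈ (0, 1/2)` — independent of the
dyadic scale `d` — such that for all `ζ ∈ [−ζ₀, 0)`, all `d ∈ ℤ` and all `ρ > 0` the
scalar curvature expression is positive. Here `ρ ^ (-2 : ℝ)` is the real power. -/
theorem dyadic_cutoff_positive (k : ℕ) (hk : 2 ≤ k) (lam : ℝ) (hlam : 0 < lam) (α : ℝ)
    (φ : ℝ → ℝ) (hφ : ContDiff ℝ 2 φ)
    (hφ0 : ∀ t : ℝ, t ≤ 0 → φ t = 1) (hφ1 : ∀ t : ℝ, 1 ≤ t → φ t = 0)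
    (hφrange : ∀ t : ℝ, 0 ≤ φ t ∧ φ t ≤ 1) :
    ∃ ζ₀ : ℝ, 0 < ζ₀ ∧ ζ₀ < 1 / 2 ∧
      ∀ ζ : ℝ, -ζ₀ ≤ ζ → ζ < 0 → ∀ d : ℤ, ∀ ρ : ℝ, 0 < ρ →
        0 < lam * ρ ^ (-2 : ℝ) * (1 + ζ * φ ((2 : ℝ) ^ d * ρ - 1)) -
            |ζ| * |(2 : ℝ) ^ (2 * d) * deriv (deriv φ) ((2 : ℝ) ^ d * ρ - 1) +
                ((k : ℝ) - 1) / ρ * ((2 : ℝ) ^ d * deriv φ ((2 : ℝ) ^ d * ρ - 1))| -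
            2 * |ζ| * |α| * |(2 : ℝ) ^ d * deriv φ ((2 : ℝ) ^ d * ρ - 1)| * ρ⁻¹ :=
  dyadic_cutoff_positive_general k lam hlam α φ hφ hφ0 hφ1 hφrange
end
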